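/- In any tangent category, an affine connection (K, H) on M (a connection on the tangent bundle p_M, so K : T²(M) → T(M) and H : T₂(M) → T²(M)) is torsion-free (i.e. cK = K) if and only if Hc = τH, where τ := ⟨π₁, π₀⟩ : T₂(M) → T₂(M) is the twist map. -/
import Mathlib


open CategoryTheory CategoryTheory.Limits

open scoped Classical

universe v u

variable {C : Type u} [Category.{v} C]

/-- Chosen pullback: explicit pullback data for a cospan `f : A ⟶ Z ⟵ B : g`. -/
structure ChosenPB {A B Z : C} (f : A ⟶ Z) (g : B ⟶ Z) where
  P : C
  pr0 : P ⟶ A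
  pr1 : P ⟶ B
  comm : pr0 ≫ f = pr1 ≫ g
  pair : ∀ {X : C} (u : X ⟶ A) (v : X ⟶ B), u ≫ f = v ≫ g → (X ⟶ P)
  pair_pr0 : ∀ {X : C} (u : X ⟶ A) (v : X ⟶ B) (h : u ≫ f = v ≫ g),
    pair u v h ≫ pr0 = u
  pair_pr1 : ∀ {X : C} (u : X ⟶ A) (v : X ⟶ B) (h : u ≫ f = v ≫ g),
    pair u v h ≫ pr1 = v
  hom_ext : ∀ {X : C} (w w' : X ⟶ P),
    w ≫ pr0 = w' ≫ pr0 → w ≫ pr1 = w' ≫ pr1 → w = w'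

/-- Witness that the endofunctor `T` preserves the chosen pullback `PB`. -/
structure PBLift (T : C ⥤ C) {A B Z : C} {f : A ⟶ Z} {g : B ⟶ Z} (PB : ChosenPB f g) where
  pair : ∀ {X : C} (u : X ⟶ T.obj A) (v : X ⟶ T.obj B),
    u ≫ T.map f = v ≫ T.map g → (X ⟶ T.obj PB.P)
  pair_pr0 : ∀ {X : C} (u : X ⟶ T.obj A) (v : X ⟶ T.obj B)
    (h : u ≫ T.map f = v ≫ T.map g), pair u v h ≫ T.map PB.pr0 = u
  pair_pr1 : ∀ {X : C} (u : X ⟶ T.obj A) (v : X ⟶ T.obj B)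
    (h : u ≫ T.map f = v ≫ T.map g), pair u v h ≫ T.map PB.pr1 = v
  hom_ext : ∀ {X : C} (w w' : X ⟶ T.obj PB.P),
    w ≫ T.map PB.pr0 = w' ≫ T.map PB.pr0 → w ≫ T.map PB.pr1 = w' ≫ T.map PB.pr1 → w = w'

/-- The image of a preserved chosen pullback is again a chosen pullback. -/
def PBLift.toChosenPB {T : C ⥤ C} {A B Z : C} {f : A ⟶ Z} {g : B ⟶ Z} {PB : ChosenPB f g}
    (L : PBLift T PB) : ChosenPB (T.map f) (T.map g) where
  P := T.obj PB.P
  pr0 := T.map PB.pr0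
  pr1 := T.map PB.pr1
  comm := by rw [← T.map_comp, ← T.map_comp, PB.comm]
  pair := L.pair
  pair_pr0 := L.pair_pr0
  pair_pr1 := L.pair_pr1
  hom_ext := L.hom_ext

/-- Iterated endofunctor `Tⁿ`. -/
def fpow (T : C ⥤ C) : ℕ → C ⥤ C
  | 0 => 𝟭 C
  | n + 1 => fpow T n ⋙ T

/-- A tangent category in the sense of Cockett–Cruttwell, presented with chosen
pullbacks `T₂M` of `p_M` along itself (preserved by each `Tⁿ`), addition `+`,
projection `p`, zero `0`, vertical lift `ℓ` and canonical flip `c`, together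
with the universality of the vertical lift. Sums, associativity etc. are
expressed in generalized-element form via the chosen pullback pairings. -/
structure TangentCat (C : Type u) [Category.{v} C] where
  T : C ⥤ C
  p : T ⟶ 𝟭 C
  zero : 𝟭 C ⟶ T
  l : T ⟶ T ⋙ T
  c : T ⋙ T ⟶ T ⋙ T
  T2 : ∀ M : C, ChosenPB (p.app M) (p.app M)
  T2T : ∀ M : C, PBLift T (T2 M)
  T2Tn : ∀ (M : C) (n : ℕ), PBLift (fpow T n) (T2 M)
  add : ∀ M : C, (T2 M).P ⟶ T.obj M
  add_nat : ∀ {M N : C} (f : M ⟶ N) {X : C} (u v : X ⟶ T.obj M)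
    (h : u ≫ p.app M = v ≫ p.app M)
    (h' : (u ≫ T.map f) ≫ p.app N = (v ≫ T.map f) ≫ p.app N),
    (T2 M).pair u v h ≫ add M ≫ T.map f
      = (T2 N).pair (u ≫ T.map f) (v ≫ T.map f) h' ≫ add N
  zero_p : ∀ M : C, zero.app M ≫ p.app M = 𝟙 M
  add_p : ∀ M : C, add M ≫ p.app M = (T2 M).pr0 ≫ p.app M
  add_comm' : ∀ (M : C) {X : C} (f g : X ⟶ T.obj M) (h : f ≫ p.app M = g ≫ p.app M),
    (T2 M).pair f g h ≫ add M = (T2 M).pair g f h.symm ≫ add M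
  add_assoc' : ∀ (M : C) {X : C} (f g k : X ⟶ T.obj M)
    (h1 : f ≫ p.app M = g ≫ p.app M) (h2 : g ≫ p.app M = k ≫ p.app M)
    (h3 : ((T2 M).pair f g h1 ≫ add M) ≫ p.app M = k ≫ p.app M)
    (h4 : f ≫ p.app M = ((T2 M).pair g k h2 ≫ add M) ≫ p.app M),
    (T2 M).pair ((T2 M).pair f g h1 ≫ add M) k h3 ≫ add M
      = (T2 M).pair f ((T2 M).pair g k h2 ≫ add M) h4 ≫ add M
  add_zero' : ∀ (M : C) {X : C} (f : X ⟶ T.obj M)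
    (h : f ≫ p.app M = (f ≫ p.app M ≫ zero.app M) ≫ p.app M),
    (T2 M).pair f (f ≫ p.app M ≫ zero.app M) h ≫ add M = f
  l_Tp : ∀ M : C, l.app M ≫ T.map (p.app M) = p.app M ≫ zero.app M
  l_zero : ∀ M : C, zero.app M ≫ l.app M = zero.app M ≫ T.map (zero.app M)
  l_add : ∀ (M : C) {X : C} (f g : X ⟶ T.obj M) (h : f ≫ p.app M = g ≫ p.app M),
    ∃ w : X ⟶ T.obj (T2 M).P,
      w ≫ T.map (T2 M).pr0 = f ≫ l.app M ∧ w ≫ T.map (T2 M).pr1 = g ≫ l.app M ∧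
      (T2 M).pair f g h ≫ add M ≫ l.app M = w ≫ T.map (add M)
  c_p : ∀ M : C, c.app M ≫ p.app (T.obj M) = T.map (p.app M)
  c_zero : ∀ M : C, T.map (zero.app M) ≫ c.app M = zero.app (T.obj M)
  c_add : ∀ (M : C) {X : C} (u v : X ⟶ T.obj (T.obj M))
    (h : u ≫ T.map (p.app M) = v ≫ T.map (p.app M))
    (h' : (u ≫ c.app M) ≫ p.app (T.obj M) = (v ≫ c.app M) ≫ p.app (T.obj M)),
    ∃ w : X ⟶ T.obj (T2 M).P,
      w ≫ T.map (T2 M).pr0 = u ∧ w ≫ T.map (T2 M).pr1 = v ∧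
      w ≫ T.map (add M) ≫ c.app M
        = (T2 (T.obj M)).pair (u ≫ c.app M) (v ≫ c.app M) h' ≫ add (T.obj M)
  l_c : ∀ M : C, l.app M ≫ c.app M = l.app M
  c_c : ∀ M : C, c.app M ≫ c.app M = 𝟙 (T.obj (T.obj M))
  l_l : ∀ M : C, l.app M ≫ T.map (l.app M) = l.app M ≫ l.app (T.obj M)
  c_T_c : ∀ M : C, c.app (T.obj M) ≫ T.map (c.app M) ≫ c.app (T.obj M)
    = T.map (c.app M) ≫ c.app (T.obj M) ≫ T.map (c.app M)
  l_T_c : ∀ M : C, l.app (T.obj M) ≫ T.map (c.app M) ≫ c.app (T.obj M)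
    = c.app M ≫ T.map (l.app M)
  vmu : ∀ M : C, (T2 M).P ⟶ T.obj (T.obj M)
  vmu_spec : ∀ M : C, ∃ w : (T2 M).P ⟶ T.obj (T2 M).P,
    w ≫ T.map (T2 M).pr0 = (T2 M).pr0 ≫ l.app M ∧
    w ≫ T.map (T2 M).pr1 = (T2 M).pr1 ≫ zero.app (T.obj M) ∧
    vmu M = w ≫ T.map (add M)
  vlift : ∀ {X M : C} (f : X ⟶ T.obj (T.obj M)),
    f ≫ T.map (p.app M) = f ≫ T.map (p.app M) ≫ p.app M ≫ zero.app M → (X ⟶ (T2 M).P)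
  vlift_vmu : ∀ {X M : C} (f : X ⟶ T.obj (T.obj M))
    (h : f ≫ T.map (p.app M) = f ≫ T.map (p.app M) ≫ p.app M ≫ zero.app M),
    vlift f h ≫ vmu M = f
  vmu_mono : ∀ {X M : C} (w w' : X ⟶ (T2 M).P), w ≫ vmu M = w' ≫ vmu M → w = w'

/-- Negatives: each tangent bundle is a commutative group bundle. -/
structure HasNegatives {C : Type u} [Category.{v} C] (D : TangentCat C) where
  neg : ∀ M : C, D.T.obj M ⟶ D.T.obj M
  neg_p : ∀ M : C, neg M ≫ D.p.app M = D.p.app M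
  neg_add : ∀ (M : C) {X : C} (f : X ⟶ D.T.obj M)
    (h : f ≫ D.p.app M = (f ≫ neg M) ≫ D.p.app M),
    (D.T2 M).pair f (f ≫ neg M) h ≫ D.add M = f ≫ D.p.app M ≫ D.zero.app M

/-- Fibrewise sum of two maps into a tangent bundle (defined when the maps
agree under `p`; otherwise a default value). -/
noncomputable def TangentCat.hadd (D : TangentCat C) {X M : C}
    (f g : X ⟶ D.T.obj M) : X ⟶ D.T.obj M :=
  if h : f ≫ D.p.app M = g ≫ D.p.app M then (D.T2 M).pair f g h ≫ D.add M else f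

/-- Fibrewise difference `f - g` of two maps into a tangent bundle. -/
noncomputable def TangentCat.sub (D : TangentCat C) (N : HasNegatives D) {X M : C}
    (f g : X ⟶ D.T.obj M) : X ⟶ D.T.obj M :=
  D.hadd f (g ≫ N.neg M)

/-- The bracketing operation `{f}` for the tangent bundle, obtained from the
universality (equalizer property) of the vertical lift. -/
noncomputable def TangentCat.brkT (D : TangentCat C) {X M : C}
    (f : X ⟶ D.T.obj (D.T.obj M)) : X ⟶ D.T.obj M :=
  if h : f ≫ D.T.map (D.p.app M) = f ≫ D.T.map (D.p.app M) ≫ D.p.app M ≫ D.zero.app M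
  then D.vlift f h ≫ (D.T2 M).pr0 else f ≫ D.p.app (D.T.obj M)

/-- The Lie bracket of vector fields: `[w₁,w₂] = {w₁T(w₂) − w₂T(w₁)c}`. -/
noncomputable def TangentCat.lie (D : TangentCat C) (N : HasNegatives D) {M : C}
    (w1 w2 : M ⟶ D.T.obj M) : M ⟶ D.T.obj M :=
  D.brkT (D.sub N (w1 ≫ D.T.map w2) (w2 ≫ D.T.map w1 ≫ D.c.app M))

/-- A differential bundle `𝗊 = (q, +_q, 0_q, λ)` on `E` over `M` in the tangent
category `D`, with chosen pullbacks `E₂` (of `q` along itself) and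
`T(M) ×_M E` (of `p_M` along `q`), both preserved by each `Tⁿ`, together with
the lift axioms and the universality of the lift (in equalizer form). -/
structure DiffBundle {C : Type u} [Category.{v} C] (D : TangentCat C) (E M : C) where
  q : E ⟶ M
  E2 : ChosenPB q q
  TE2 : PBLift D.T E2
  TE2n : ∀ n : ℕ, PBLift (fpow D.T n) E2
  P : ChosenPB (D.p.app M) q
  TP : PBLift D.T P
  TPn : ∀ n : ℕ, PBLift (fpow D.T n) P
  addq : E2.P ⟶ E
  zeroq : M ⟶ E
  lam : E ⟶ D.T.obj E
  addq_q : addq ≫ q = E2.pr0 ≫ q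
  zeroq_q : zeroq ≫ q = 𝟙 M
  addq_comm : ∀ {X : C} (f g : X ⟶ E) (h : f ≫ q = g ≫ q),
    E2.pair f g h ≫ addq = E2.pair g f h.symm ≫ addq
  addq_assoc : ∀ {X : C} (f g k : X ⟶ E)
    (h1 : f ≫ q = g ≫ q) (h2 : g ≫ q = k ≫ q)
    (h3 : (E2.pair f g h1 ≫ addq) ≫ q = k ≫ q)
    (h4 : f ≫ q = (E2.pair g k h2 ≫ addq) ≫ q),
    E2.pair (E2.pair f g h1 ≫ addq) k h3 ≫ addq
      = E2.pair f (E2.pair g k h2 ≫ addq) h4 ≫ addq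
  addq_zero : ∀ {X : C} (f : X ⟶ E) (h : f ≫ q = (f ≫ q ≫ zeroq) ≫ q),
    E2.pair f (f ≫ q ≫ zeroq) h ≫ addq = f
  lam_Tq : lam ≫ D.T.map q = q ≫ D.zero.app M
  lam_zero1 : zeroq ≫ lam = D.zero.app M ≫ D.T.map zeroq
  lam_add1 : ∀ {X : C} (f g : X ⟶ E) (h : f ≫ q = g ≫ q),
    ∃ w : X ⟶ D.T.obj E2.P,
      w ≫ D.T.map E2.pr0 = f ≫ lam ∧ w ≫ D.T.map E2.pr1 = g ≫ lam ∧
      E2.pair f g h ≫ addq ≫ lam = w ≫ D.T.map addq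
  lam_p : lam ≫ D.p.app E = q ≫ zeroq
  lam_zero2 : zeroq ≫ lam = zeroq ≫ D.zero.app E
  lam_add2 : ∀ {X : C} (f g : X ⟶ E) (h : f ≫ q = g ≫ q)
    (h' : (f ≫ lam) ≫ D.p.app E = (g ≫ lam) ≫ D.p.app E),
    E2.pair f g h ≫ addq ≫ lam = (D.T2 E).pair (f ≫ lam) (g ≫ lam) h' ≫ D.add E
  lam_l : lam ≫ D.l.app E = lam ≫ D.T.map lam
  mu : E2.P ⟶ D.T.obj E
  mu_spec : ∃ w : E2.P ⟶ D.T.obj E2.P,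
    w ≫ D.T.map E2.pr0 = E2.pr0 ≫ lam ∧
    w ≫ D.T.map E2.pr1 = E2.pr1 ≫ D.zero.app E ∧
    mu = w ≫ D.T.map addq
  muLift : ∀ {X : C} (f : X ⟶ D.T.obj E),
    f ≫ D.T.map q = f ≫ D.p.app E ≫ q ≫ D.zero.app M → (X ⟶ E2.P)
  muLift_mu : ∀ {X : C} (f : X ⟶ D.T.obj E)
    (h : f ≫ D.T.map q = f ≫ D.p.app E ≫ q ≫ D.zero.app M),
    muLift f h ≫ mu = f
  muLift_q : ∀ {X : C} (f : X ⟶ D.T.obj E)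
    (h : f ≫ D.T.map q = f ≫ D.p.app E ≫ q ≫ D.zero.app M),
    muLift f h ≫ E2.pr0 ≫ q = f ≫ D.p.app E ≫ q
  mu_mono : ∀ {X : C} (w w' : X ⟶ E2.P), w ≫ mu = w' ≫ mu → w = w'

/-- The bracketing operation `{f}` for a differential bundle. -/
noncomputable def DiffBundle.brk {D : TangentCat C} {E M : C} (B : DiffBundle D E M)
    {X : C} (f : X ⟶ D.T.obj E) : X ⟶ E :=
  if h : f ≫ D.T.map B.q = f ≫ D.p.app E ≫ B.q ≫ D.zero.app M
  then B.muLift f h ≫ B.E2.pr0 else f ≫ D.p.app E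

/-- Negatives for a differential bundle (the fibrewise group structure). -/
structure BundleNegatives {D : TangentCat C} {E M : C} (B : DiffBundle D E M) where
  neg : E ⟶ E
  neg_q : neg ≫ B.q = B.q
  neg_add : ∀ {X : C} (f : X ⟶ E) (h : f ≫ B.q = (f ≫ neg) ≫ B.q),
    B.E2.pair f (f ≫ neg) h ≫ B.addq = f ≫ B.q ≫ B.zeroq

/-- Fibrewise sum of maps into `E` for the bundle addition `+_q`. -/
noncomputable def DiffBundle.qadd {D : TangentCat C} {E M : C} (B : DiffBundle D E M)
    {X : C} (f g : X ⟶ E) : X ⟶ E :=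
  if h : f ≫ B.q = g ≫ B.q then B.E2.pair f g h ≫ B.addq else f

/-- Fibrewise difference of maps into `E` for the bundle addition `+_q`. -/
noncomputable def DiffBundle.qsub {D : TangentCat C} {E M : C} (B : DiffBundle D E M)
    (NB : BundleNegatives B) {X : C} (f g : X ⟶ E) : X ⟶ E :=
  B.qadd f (g ≫ NB.neg)

/-- The horizontal descent `U = ⟨T(q), p⟩ : T(E) ⟶ T(M) ×_M E`. -/
def TangentCat.hdesc (D : TangentCat C) {E M : C} (q : E ⟶ M)
    (P : ChosenPB (D.p.app M) q) : D.T.obj E ⟶ P.P :=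
  P.pair (D.T.map q) (D.p.app E) (by simpa using D.p.naturality q)

/-- A vertical connection on the differential bundle with projection `q` and
lift `lam`: a retraction `K` of `lam` with `Kq = pq`, `Kλ = ℓT(K)` and
`Kλ = T(λ)cT(K)` (equivalently, `(K,p)` and `(K,q)` are linear bundle
morphisms). -/
def IsVerticalConnection (D : TangentCat C) {E M : C} (q : E ⟶ M)
    (lam : E ⟶ D.T.obj E) (K : D.T.obj E ⟶ E) : Prop :=
  lam ≫ K = 𝟙 E ∧
  K ≫ q = D.p.app E ≫ q ∧
  K ≫ lam = D.l.app E ≫ D.T.map K ∧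
  K ≫ lam = D.T.map lam ≫ D.c.app E ≫ D.T.map K

/-- Flatness of a vertical connection: `cT(K)K = T(K)K`. -/
def IsFlat (D : TangentCat C) {E : C} (K : D.T.obj E ⟶ E) : Prop :=
  D.c.app E ≫ D.T.map K ≫ K = D.T.map K ≫ K

/-- A horizontal connection on the differential bundle with projection `q`,
lift `lam` and horizontal pullback `P = T(M) ×_M E`: a section `H` of the
horizontal descent `U = ⟨T(q),p⟩` with `Hℓ = (ℓ×0)T(H)` and
`HT(λ)c = (0×λ)T(H)` (equivalently, `(H,1)` is linear into `p_E` and into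
`T(𝗊)`). -/
def IsHorizontalConnection (D : TangentCat C) {E M : C} (q : E ⟶ M)
    (lam : E ⟶ D.T.obj E) (P : ChosenPB (D.p.app M) q)
    (H : P.P ⟶ D.T.obj E) : Prop :=
  H ≫ D.T.map q = P.pr0 ∧
  H ≫ D.p.app E = P.pr1 ∧
  (∃ w : P.P ⟶ D.T.obj P.P,
    w ≫ D.T.map P.pr0 = P.pr0 ≫ D.l.app M ∧
    w ≫ D.T.map P.pr1 = P.pr1 ≫ D.zero.app E ∧
    H ≫ D.l.app E = w ≫ D.T.map H) ∧
  (∃ w : P.P ⟶ D.T.obj P.P,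
    w ≫ D.T.map P.pr0 = P.pr0 ≫ D.zero.app (D.T.obj M) ∧
    w ≫ D.T.map P.pr1 = P.pr1 ≫ lam ∧
    H ≫ D.T.map lam ≫ D.c.app E = w ≫ D.T.map H)

/-- A (full) connection, in unbundled form: a vertical connection `K` and a
horizontal connection `H` with `HK = π₁q0_q` and `⟨K,p⟩μ + UH = 1`. -/
noncomputable def IsConnectionPair (D : TangentCat C) {E M : C} (q : E ⟶ M)
    (lam : E ⟶ D.T.obj E) (EP : ChosenPB q q) (zeroq : M ⟶ E)
    (mu : EP.P ⟶ D.T.obj E) (P : ChosenPB (D.p.app M) q)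
    (K : D.T.obj E ⟶ E) (H : P.P ⟶ D.T.obj E) : Prop :=
  IsVerticalConnection D q lam K ∧
  IsHorizontalConnection D q lam P H ∧
  H ≫ K = P.pr1 ≫ q ≫ zeroq ∧
  ∃ R : D.T.obj E ⟶ EP.P, R ≫ EP.pr0 = K ∧ R ≫ EP.pr1 = D.p.app E ∧
    D.hadd (R ≫ mu) (D.hdesc q P ≫ H) = 𝟙 (D.T.obj E)

/-- A connection on a differential bundle. -/
noncomputable def IsConnection {D : TangentCat C} {E M : C} (B : DiffBundle D E M)
    (K : D.T.obj E ⟶ E) (H : B.P.P ⟶ D.T.obj E) : Prop :=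
  IsConnectionPair D B.q B.lam B.E2 B.zeroq B.mu B.P K H

/-- A Finsler connection on a differential bundle. -/
def IsFinslerConnection {D : TangentCat C} {E M : C} (B : DiffBundle D E M)
    (R : D.T.obj E ⟶ B.E2.P) : Prop :=
  B.mu ≫ R = 𝟙 B.E2.P ∧
  R ≫ B.E2.pr1 = D.p.app E ∧
  R ≫ B.E2.pr0 ≫ B.lam = D.T.map B.lam ≫ D.c.app E ≫ D.T.map (R ≫ B.E2.pr0) ∧
  D.l.app E ≫ D.T.map (R ≫ B.E2.pr0) = R ≫ B.E2.pr0 ≫ B.lam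

/-- The covariant derivative `∇_K(w,s) = wT(s)K`. -/
def nabla (D : TangentCat C) {E M : C} (K : D.T.obj E ⟶ E)
    (w : M ⟶ D.T.obj M) (s : M ⟶ E) : M ⟶ E :=
  w ≫ D.T.map s ≫ K


/-! ### Auxiliary lemmas for Statement 18 -/

section Stmt18Aux

namespace ChosenPB

variable {A B Z : C} {f : A ⟶ Z} {g : B ⟶ Z} (PB : ChosenPB f g)

lemma pair_congr {X : C} {u u' : X ⟶ A} {v v' : X ⟶ B} (hu : u = u') (hv : v = v')
    (h : u ≫ f = v ≫ g) (h' : u' ≫ f = v' ≫ g) :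
    PB.pair u v h = PB.pair u' v' h' := by subst hu; subst hv; rfl

lemma comp_pair {X Y : C} (a : Y ⟶ X) (u : X ⟶ A) (v : X ⟶ B)
    (h : u ≫ f = v ≫ g) (h' : (a ≫ u) ≫ f = (a ≫ v) ≫ g) :
    a ≫ PB.pair u v h = PB.pair (a ≫ u) (a ≫ v) h' := by
  refine PB.hom_ext _ _ ?_ ?_
  · rw [Category.assoc, PB.pair_pr0, PB.pair_pr0]
  · rw [Category.assoc, PB.pair_pr1, PB.pair_pr1]

lemma pair_proj : PB.pair PB.pr0 PB.pr1 PB.comm = 𝟙 PB.P := by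
  refine PB.hom_ext _ _ ?_ ?_
  · rw [PB.pair_pr0, Category.id_comp]
  · rw [PB.pair_pr1, Category.id_comp]

end ChosenPB

namespace TangentCat

variable (D : TangentCat C)

lemma p_nat {A B : C} (f : A ⟶ B) :
    D.T.map f ≫ D.p.app B = D.p.app A ≫ f := by
  simpa using D.p.naturality f

lemma zero_nat {A B : C} (f : A ⟶ B) :
    f ≫ D.zero.app B = D.zero.app A ≫ D.T.map f := by
  simpa using D.zero.naturality f

lemma l_nat {A B : C} (f : A ⟶ B) :
    D.T.map f ≫ D.l.app B = D.l.app A ≫ D.T.map (D.T.map f) := by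
  simpa using D.l.naturality f

lemma c_nat {A B : C} (f : A ⟶ B) :
    D.T.map (D.T.map f) ≫ D.c.app B = D.c.app A ≫ D.T.map (D.T.map f) := by
  simpa using D.c.naturality f

lemma l_p (N : C) :
    D.l.app N ≫ D.p.app (D.T.obj N) = D.p.app N ≫ D.zero.app N := by
  rw [← D.l_c N, Category.assoc, D.c_p, D.l_Tp]

lemma c_Tp (N : C) :
    D.c.app N ≫ D.T.map (D.p.app N) = D.p.app (D.T.obj N) := by
  rw [← D.c_p N, ← Category.assoc, D.c_c]; simp

lemma zero_c (N : C) :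
    D.zero.app (D.T.obj N) ≫ D.c.app N = D.T.map (D.zero.app N) := by
  rw [← D.c_zero N, Category.assoc, D.c_c]; simp


/-- `ℓ` is an additive bundle morphism into the tangent bundle of `T N`:
`(u + v) ≫ ℓ = (uℓ +' vℓ)`. -/
lemma tadd_l (N : C) {X : C} (u v : X ⟶ D.T.obj N)
    (h : u ≫ D.p.app N = v ≫ D.p.app N)
    (h' : (u ≫ D.l.app N) ≫ D.p.app (D.T.obj N)
        = (v ≫ D.l.app N) ≫ D.p.app (D.T.obj N)) :
    (D.T2 N).pair u v h ≫ D.add N ≫ D.l.app N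
      = (D.T2 (D.T.obj N)).pair (u ≫ D.l.app N) (v ≫ D.l.app N) h' ≫ D.add (D.T.obj N) := by
  obtain ⟨w, hw0, hw1, hw⟩ := D.l_add N u v h
  have hcond : (u ≫ D.l.app N) ≫ D.T.map (D.p.app N)
      = (v ≫ D.l.app N) ≫ D.T.map (D.p.app N) := by
    rw [Category.assoc, Category.assoc, D.l_Tp, ← Category.assoc, ← Category.assoc, h]
  have hcond' : ((u ≫ D.l.app N) ≫ D.c.app N) ≫ D.p.app (D.T.obj N)
      = ((v ≫ D.l.app N) ≫ D.c.app N) ≫ D.p.app (D.T.obj N) := by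
    simp only [Category.assoc, D.c_p, D.l_Tp]
    rw [← Category.assoc, ← Category.assoc, h]
  obtain ⟨w2, h20, h21, h2⟩ := D.c_add N (u ≫ D.l.app N) (v ≫ D.l.app N) hcond hcond'
  have hww : w = w2 := by
    refine (D.T2T N).hom_ext _ _ ?_ ?_
    · rw [hw0, h20]
    · rw [hw1, h21]
  have lc : ((D.T2 N).pair u v h ≫ D.add N ≫ D.l.app N) ≫ D.c.app N
      = (D.T2 N).pair u v h ≫ D.add N ≫ D.l.app N := by
    rw [Category.assoc, Category.assoc, D.l_c]
  calc (D.T2 N).pair u v h ≫ D.add N ≫ D.l.app N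
      = ((D.T2 N).pair u v h ≫ D.add N ≫ D.l.app N) ≫ D.c.app N := lc.symm
    _ = (w2 ≫ D.T.map (D.add N)) ≫ D.c.app N := by rw [hw, hww]
    _ = (D.T2 (D.T.obj N)).pair ((u ≫ D.l.app N) ≫ D.c.app N) ((v ≫ D.l.app N) ≫ D.c.app N)
          hcond' ≫ D.add (D.T.obj N) := by rw [Category.assoc]; exact h2
    _ = (D.T2 (D.T.obj N)).pair (u ≫ D.l.app N) (v ≫ D.l.app N) h' ≫ D.add (D.T.obj N) := by
        refine congrArg (· ≫ D.add (D.T.obj N)) ?_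
        refine (D.T2 (D.T.obj N)).pair_congr ?_ ?_ _ _
        · rw [Category.assoc, D.l_c]
        · rw [Category.assoc, D.l_c]

/-- `c` turns the tangent addition on `T²N` into `T(+)`. -/
lemma tadd_c (N : C) {X : C} (u v : X ⟶ D.T.obj (D.T.obj N))
    (h : u ≫ D.p.app (D.T.obj N) = v ≫ D.p.app (D.T.obj N)) :
    ∃ W : X ⟶ D.T.obj (D.T2 N).P,
      W ≫ D.T.map (D.T2 N).pr0 = u ≫ D.c.app N ∧
      W ≫ D.T.map (D.T2 N).pr1 = v ≫ D.c.app N ∧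
      (D.T2 (D.T.obj N)).pair u v h ≫ D.add (D.T.obj N) ≫ D.c.app N
        = W ≫ D.T.map (D.add N) := by
  have hcond : (u ≫ D.c.app N) ≫ D.T.map (D.p.app N)
      = (v ≫ D.c.app N) ≫ D.T.map (D.p.app N) := by
    rw [Category.assoc, D.c_Tp, Category.assoc, D.c_Tp, h]
  have hcond' : ((u ≫ D.c.app N) ≫ D.c.app N) ≫ D.p.app (D.T.obj N)
      = ((v ≫ D.c.app N) ≫ D.c.app N) ≫ D.p.app (D.T.obj N) := by
    simp only [Category.assoc, D.c_p, D.c_Tp]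
    exact h
  obtain ⟨w, h0, h1, h2⟩ := D.c_add N (u ≫ D.c.app N) (v ≫ D.c.app N) hcond hcond'
  refine ⟨w, h0, h1, ?_⟩
  have huu : ((u ≫ D.c.app N) ≫ D.c.app N) = u := by
    rw [Category.assoc, D.c_c, Category.comp_id]
  have hvv : ((v ≫ D.c.app N) ≫ D.c.app N) = v := by
    rw [Category.assoc, D.c_c, Category.comp_id]
  have h2' : w ≫ D.T.map (D.add N) ≫ D.c.app N
      = (D.T2 (D.T.obj N)).pair u v h ≫ D.add (D.T.obj N) := by
    rw [h2]
    refine congrArg (· ≫ D.add (D.T.obj N)) ?_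
    exact (D.T2 (D.T.obj N)).pair_congr huu hvv _ _
  calc (D.T2 (D.T.obj N)).pair u v h ≫ D.add (D.T.obj N) ≫ D.c.app N
      = ((D.T2 (D.T.obj N)).pair u v h ≫ D.add (D.T.obj N)) ≫ D.c.app N := by
        rw [Category.assoc]
    _ = (w ≫ D.T.map (D.add N) ≫ D.c.app N) ≫ D.c.app N := by rw [h2']
    _ = w ≫ D.T.map (D.add N) ≫ (D.c.app N ≫ D.c.app N) := by
        simp only [Category.assoc]
    _ = w ≫ D.T.map (D.add N) := by rw [D.c_c, Category.comp_id]

/-- `ℓ = ⟨1, p0⟩ ≫ μ`. -/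
lemma l_pair_vmu (N : C)
    (h : 𝟙 (D.T.obj N) ≫ D.p.app N = (D.p.app N ≫ D.zero.app N) ≫ D.p.app N) :
    (D.T2 N).pair (𝟙 (D.T.obj N)) (D.p.app N ≫ D.zero.app N) h ≫ D.vmu N
      = D.l.app N := by
  obtain ⟨w, h0, h1, hmu⟩ := D.vmu_spec N
  have hz : 𝟙 (D.T.obj N) ≫ D.p.app N
      = (𝟙 (D.T.obj N) ≫ D.p.app N ≫ D.zero.app N) ≫ D.p.app N := by
    simp [D.zero_p N]
  have hid : (D.T2 N).pair (𝟙 (D.T.obj N))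
      (𝟙 (D.T.obj N) ≫ D.p.app N ≫ D.zero.app N) hz ≫ D.add N = 𝟙 (D.T.obj N) :=
    D.add_zero' N (𝟙 (D.T.obj N)) hz
  have hpair : (D.T2 N).pair (𝟙 (D.T.obj N)) (D.p.app N ≫ D.zero.app N) h
      = (D.T2 N).pair (𝟙 (D.T.obj N)) (𝟙 (D.T.obj N) ≫ D.p.app N ≫ D.zero.app N) hz :=
    (D.T2 N).pair_congr rfl (by simp) _ _
  have hlw : D.l.app N ≫ D.T.map ((D.T2 N).pair (𝟙 (D.T.obj N))
        (𝟙 (D.T.obj N) ≫ D.p.app N ≫ D.zero.app N) hz)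
      = (D.T2 N).pair (𝟙 (D.T.obj N)) (D.p.app N ≫ D.zero.app N) h ≫ w := by
    refine (D.T2T N).hom_ext _ _ ?_ ?_
    · rw [Category.assoc, ← D.T.map_comp, (D.T2 N).pair_pr0]
      rw [Category.assoc, h0, ← Category.assoc, (D.T2 N).pair_pr0]
      simp
    · conv_lhs => rw [Category.assoc, ← D.T.map_comp, (D.T2 N).pair_pr1]
      conv_rhs => rw [Category.assoc, h1, ← Category.assoc, (D.T2 N).pair_pr1]
      simp only [Category.id_comp, D.T.map_comp]
      rw [← Category.assoc, D.l_Tp, Category.assoc, ← D.zero_nat (A := N) (B := D.T.obj N) (D.zero.app N)]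
      simp only [Category.assoc]
  calc (D.T2 N).pair (𝟙 (D.T.obj N)) (D.p.app N ≫ D.zero.app N) h ≫ D.vmu N
      = (D.T2 N).pair (𝟙 (D.T.obj N)) (D.p.app N ≫ D.zero.app N) h ≫ w
          ≫ D.T.map (D.add N) := by rw [hmu]
    _ = (D.l.app N ≫ D.T.map ((D.T2 N).pair (𝟙 (D.T.obj N))
          (𝟙 (D.T.obj N) ≫ D.p.app N ≫ D.zero.app N) hz)) ≫ D.T.map (D.add N) := by
        rw [hlw, Category.assoc]
    _ = D.l.app N ≫ D.T.map ((D.T2 N).pair (𝟙 (D.T.obj N))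
          (𝟙 (D.T.obj N) ≫ D.p.app N ≫ D.zero.app N) hz ≫ D.add N) := by
        rw [Category.assoc, ← D.T.map_comp]
    _ = D.l.app N := by rw [hid]; simp

/-- `ℓ` is monic. -/
lemma l_mono (N : C) {X : C} (a b : X ⟶ D.T.obj N)
    (hab : a ≫ D.l.app N = b ≫ D.l.app N) : a = b := by
  have h : 𝟙 (D.T.obj N) ≫ D.p.app N = (D.p.app N ≫ D.zero.app N) ≫ D.p.app N := by
    simp [D.zero_p N]
  have key : ∀ x : X ⟶ D.T.obj N, x ≫ D.l.app N
      = (D.T2 N).pair x (x ≫ D.p.app N ≫ D.zero.app N)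
        (by simp [D.zero_p N]) ≫ D.vmu N := by
    intro x
    rw [← D.l_pair_vmu N h, ← Category.assoc,
      (D.T2 N).comp_pair x _ _ h (by simp [D.zero_p N])]
    refine congrArg (· ≫ D.vmu N) ?_
    exact (D.T2 N).pair_congr (by simp) (by simp) _ _
  rw [key a, key b] at hab
  have := D.vmu_mono _ _ hab
  have := congrArg (· ≫ (D.T2 N).pr0) this
  simpa [(D.T2 N).pair_pr0] using this


/-- `⟨f ≫ p ≫ 0, g⟩ ≫ + = g`. -/
lemma pair_zero_add (N : C) {X : C} (f g : X ⟶ D.T.obj N)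
    (hfg : f ≫ D.p.app N = g ≫ D.p.app N)
    (h : (f ≫ D.p.app N ≫ D.zero.app N) ≫ D.p.app N = g ≫ D.p.app N) :
    (D.T2 N).pair (f ≫ D.p.app N ≫ D.zero.app N) g h ≫ D.add N = g := by
  rw [D.add_comm' N _ _ h]
  have hz : g ≫ D.p.app N = (g ≫ D.p.app N ≫ D.zero.app N) ≫ D.p.app N := by
    simp [D.zero_p N]
  have : (D.T2 N).pair g (f ≫ D.p.app N ≫ D.zero.app N) h.symm
      = (D.T2 N).pair g (g ≫ D.p.app N ≫ D.zero.app N) hz := by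
    refine (D.T2 N).pair_congr rfl ?_ _ _
    rw [← Category.assoc, ← Category.assoc, hfg]
  rw [this]
  exact D.add_zero' N g hz

/-- `μ ≫ p = π₁`. -/
lemma vmu_p (N : C) : D.vmu N ≫ D.p.app (D.T.obj N) = (D.T2 N).pr1 := by
  obtain ⟨w, h0, h1, hmu⟩ := D.vmu_spec N
  have hc : ((D.T2 N).pr0 ≫ D.p.app N ≫ D.zero.app N) ≫ D.p.app N
      = (D.T2 N).pr1 ≫ D.p.app N := by
    have h1 : ((D.T2 N).pr0 ≫ D.p.app N ≫ D.zero.app N) ≫ D.p.app N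
        = (D.T2 N).pr0 ≫ D.p.app N := by simp [D.zero_p N]
    rw [h1]; exact (D.T2 N).comm
  have ha : w ≫ D.p.app (D.T2 N).P
      = (D.T2 N).pair ((D.T2 N).pr0 ≫ D.p.app N ≫ D.zero.app N) ((D.T2 N).pr1) hc := by
    refine (D.T2 N).hom_ext _ _ ?_ ?_
    · rw [(D.T2 N).pair_pr0, Category.assoc, ← D.p_nat (D.T2 N).pr0,
        ← Category.assoc, h0, Category.assoc, D.l_p, ← Category.assoc]
    · rw [(D.T2 N).pair_pr1, Category.assoc, ← D.p_nat (D.T2 N).pr1,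
        ← Category.assoc, h1, Category.assoc, D.zero_p, Category.comp_id]
  calc D.vmu N ≫ D.p.app (D.T.obj N)
      = w ≫ D.T.map (D.add N) ≫ D.p.app (D.T.obj N) := by rw [hmu, Category.assoc]
    _ = w ≫ D.p.app (D.T2 N).P ≫ D.add N := by rw [D.p_nat (D.add N)]
    _ = (D.T2 N).pair ((D.T2 N).pr0 ≫ D.p.app N ≫ D.zero.app N) ((D.T2 N).pr1) hc
          ≫ D.add N := by rw [← Category.assoc, ha]
    _ = (D.T2 N).pr1 := D.pair_zero_add N _ _ (D.T2 N).comm hc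

/-- `μ ≫ c = ⟨π₀ ≫ ℓ, π₁ ≫ T(0)⟩ ≫ +_{TN}`. -/
lemma vmu_c (N : C)
    (h : ((D.T2 N).pr0 ≫ D.l.app N) ≫ D.p.app (D.T.obj N)
        = ((D.T2 N).pr1 ≫ D.T.map (D.zero.app N)) ≫ D.p.app (D.T.obj N)) :
    D.vmu N ≫ D.c.app N
      = (D.T2 (D.T.obj N)).pair ((D.T2 N).pr0 ≫ D.l.app N)
          ((D.T2 N).pr1 ≫ D.T.map (D.zero.app N)) h ≫ D.add (D.T.obj N) := by
  obtain ⟨w, h0, h1, hmu⟩ := D.vmu_spec N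
  have hcond : ((D.T2 N).pr0 ≫ D.l.app N) ≫ D.T.map (D.p.app N)
      = ((D.T2 N).pr1 ≫ D.zero.app (D.T.obj N)) ≫ D.T.map (D.p.app N) := by
    rw [Category.assoc, D.l_Tp, Category.assoc,
      ← D.zero_nat (A := D.T.obj N) (B := N) (D.p.app N),
      ← Category.assoc, ← Category.assoc, (D.T2 N).comm]
  have hcond' : (((D.T2 N).pr0 ≫ D.l.app N) ≫ D.c.app N) ≫ D.p.app (D.T.obj N)
      = (((D.T2 N).pr1 ≫ D.zero.app (D.T.obj N)) ≫ D.c.app N) ≫ D.p.app (D.T.obj N) := by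
    simp only [Category.assoc, D.c_p]
    simpa only [Category.assoc] using hcond
  obtain ⟨w2, h20, h21, h2⟩ := D.c_add N ((D.T2 N).pr0 ≫ D.l.app N)
    ((D.T2 N).pr1 ≫ D.zero.app (D.T.obj N)) hcond hcond'
  have hww : w = w2 := by
    refine (D.T2T N).hom_ext _ _ ?_ ?_
    · rw [h0, h20]
    · rw [h1, h21]
  calc D.vmu N ≫ D.c.app N = w2 ≫ D.T.map (D.add N) ≫ D.c.app N := by
        rw [hmu, hww, Category.assoc]
    _ = (D.T2 (D.T.obj N)).pair (((D.T2 N).pr0 ≫ D.l.app N) ≫ D.c.app N)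
          (((D.T2 N).pr1 ≫ D.zero.app (D.T.obj N)) ≫ D.c.app N) hcond'
          ≫ D.add (D.T.obj N) := h2
    _ = (D.T2 (D.T.obj N)).pair ((D.T2 N).pr0 ≫ D.l.app N)
          ((D.T2 N).pr1 ≫ D.T.map (D.zero.app N)) h ≫ D.add (D.T.obj N) := by
        refine congrArg (· ≫ D.add (D.T.obj N)) ?_
        refine (D.T2 (D.T.obj N)).pair_congr ?_ ?_ _ _
        · rw [Category.assoc, D.l_c]
        · rw [Category.assoc, D.zero_c]

section KLemmas

variable {M : C} (K : D.T.obj (D.T.obj M) ⟶ D.T.obj M)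

/-- composing with `ℓ` preserves `p`-equality. -/
lemma comp_l_p (N : C) {X : C} (u v : X ⟶ D.T.obj N)
    (h : u ≫ D.p.app N = v ≫ D.p.app N) :
    (u ≫ D.l.app N) ≫ D.p.app (D.T.obj N) = (v ≫ D.l.app N) ≫ D.p.app (D.T.obj N) := by
  rw [Category.assoc, Category.assoc, D.l_p, ← Category.assoc, ← Category.assoc, h]

/-- `K` is additive w.r.t. the tangent addition on `T²M`. -/
lemma addK (hKl : K ≫ D.l.app M = D.l.app (D.T.obj M) ≫ D.T.map K)
    {X : C} (u v : X ⟶ D.T.obj (D.T.obj M))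
    (h : u ≫ D.p.app (D.T.obj M) = v ≫ D.p.app (D.T.obj M))
    (h'' : (u ≫ K) ≫ D.p.app M = (v ≫ K) ≫ D.p.app M) :
    (D.T2 (D.T.obj M)).pair u v h ≫ D.add (D.T.obj M) ≫ K
      = (D.T2 M).pair (u ≫ K) (v ≫ K) h'' ≫ D.add M := by
  refine D.l_mono M _ _ ?_
  have hA := D.comp_l_p (D.T.obj M) u v h
  have hB := D.comp_l_p M (u ≫ K) (v ≫ K) h''
  have e : ∀ x : X ⟶ D.T.obj (D.T.obj M),
      (x ≫ D.l.app (D.T.obj M)) ≫ D.T.map K = (x ≫ K) ≫ D.l.app M := by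
    intro x
    rw [Category.assoc, ← hKl, Category.assoc]
  have hC : ((u ≫ D.l.app (D.T.obj M)) ≫ D.T.map K) ≫ D.p.app (D.T.obj M)
      = ((v ≫ D.l.app (D.T.obj M)) ≫ D.T.map K) ≫ D.p.app (D.T.obj M) := by
    rw [e u, e v]; exact hB
  calc ((D.T2 (D.T.obj M)).pair u v h ≫ D.add (D.T.obj M) ≫ K) ≫ D.l.app M
      = (D.T2 (D.T.obj M)).pair u v h ≫ D.add (D.T.obj M) ≫ (K ≫ D.l.app M) := by
        simp only [Category.assoc]
    _ = ((D.T2 (D.T.obj M)).pair u v h ≫ D.add (D.T.obj M) ≫ D.l.app (D.T.obj M))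
          ≫ D.T.map K := by rw [hKl]; simp only [Category.assoc]
    _ = ((D.T2 (D.T.obj (D.T.obj M))).pair (u ≫ D.l.app (D.T.obj M))
          (v ≫ D.l.app (D.T.obj M)) hA ≫ D.add (D.T.obj (D.T.obj M))) ≫ D.T.map K := by
        rw [D.tadd_l (D.T.obj M) u v h hA]
    _ = (D.T2 (D.T.obj M)).pair ((u ≫ D.l.app (D.T.obj M)) ≫ D.T.map K)
          ((v ≫ D.l.app (D.T.obj M)) ≫ D.T.map K) hC ≫ D.add (D.T.obj M) := by
        rw [Category.assoc ((D.T2 (D.T.obj (D.T.obj M))).pair (u ≫ D.l.app (D.T.obj M))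
          (v ≫ D.l.app (D.T.obj M)) hA) (D.add (D.T.obj (D.T.obj M))) (D.T.map K)]
        exact D.add_nat K _ _ hA hC
    _ = (D.T2 (D.T.obj M)).pair ((u ≫ K) ≫ D.l.app M) ((v ≫ K) ≫ D.l.app M) hB
          ≫ D.add (D.T.obj M) := by
        refine congrArg (· ≫ D.add (D.T.obj M)) ?_
        exact (D.T2 (D.T.obj M)).pair_congr (e u) (e v) _ _
    _ = ((D.T2 M).pair (u ≫ K) (v ≫ K) h'' ≫ D.add M) ≫ D.l.app M := by
        rw [Category.assoc ((D.T2 M).pair (u ≫ K) (v ≫ K) h'') (D.add M) (D.l.app M),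
          D.tadd_l M (u ≫ K) (v ≫ K) h'' hB]


/-- `K` is additive w.r.t. `T(+)`. -/
lemma TaddK (hKl2 : K ≫ D.l.app M
      = D.T.map (D.l.app M) ≫ D.c.app (D.T.obj M) ≫ D.T.map K)
    {X : C} (W : X ⟶ D.T.obj (D.T2 M).P)
    (h'' : ((W ≫ D.T.map (D.T2 M).pr0) ≫ K) ≫ D.p.app M
        = ((W ≫ D.T.map (D.T2 M).pr1) ≫ K) ≫ D.p.app M) :
    W ≫ D.T.map (D.add M) ≫ K
      = (D.T2 M).pair ((W ≫ D.T.map (D.T2 M).pr0) ≫ K)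
          ((W ≫ D.T.map (D.T2 M).pr1) ≫ K) h'' ≫ D.add M := by
  refine D.l_mono M _ _ ?_
  have hP := D.comp_l_p M (D.T2 M).pr0 (D.T2 M).pr1 (D.T2 M).comm
  have hB := D.comp_l_p M ((W ≫ D.T.map (D.T2 M).pr0) ≫ K)
    ((W ≫ D.T.map (D.T2 M).pr1) ≫ K) h''
  have e1 : D.add M ≫ D.l.app M
      = (D.T2 (D.T.obj M)).pair ((D.T2 M).pr0 ≫ D.l.app M)
          ((D.T2 M).pr1 ≫ D.l.app M) hP ≫ D.add (D.T.obj M) := by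
    have h := D.tadd_l M (D.T2 M).pr0 (D.T2 M).pr1 (D.T2 M).comm hP
    rw [(D.T2 M).pair_proj] at h
    simpa using h
  have e2 : ∀ (y : X ⟶ D.T.obj (D.T.obj M)),
      ((y ≫ D.T.map (D.l.app M)) ≫ D.c.app (D.T.obj M)) ≫ D.T.map K
        = (y ≫ K) ≫ D.l.app M := by
    intro y
    rw [Category.assoc, Category.assoc, ← hKl2, Category.assoc]
  have hz0 : (W ≫ D.T.map ((D.T2 (D.T.obj M)).pair ((D.T2 M).pr0 ≫ D.l.app M)
        ((D.T2 M).pr1 ≫ D.l.app M) hP)) ≫ D.T.map (D.T2 (D.T.obj M)).pr0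
      = (W ≫ D.T.map (D.T2 M).pr0) ≫ D.T.map (D.l.app M) := by
    rw [Category.assoc, ← D.T.map_comp, (D.T2 (D.T.obj M)).pair_pr0,
      D.T.map_comp, ← Category.assoc]
  have hz1 : (W ≫ D.T.map ((D.T2 (D.T.obj M)).pair ((D.T2 M).pr0 ≫ D.l.app M)
        ((D.T2 M).pr1 ≫ D.l.app M) hP)) ≫ D.T.map (D.T2 (D.T.obj M)).pr1
      = (W ≫ D.T.map (D.T2 M).pr1) ≫ D.T.map (D.l.app M) := by
    rw [Category.assoc, ← D.T.map_comp, (D.T2 (D.T.obj M)).pair_pr1,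
      D.T.map_comp, ← Category.assoc]
  have hcond : ((W ≫ D.T.map ((D.T2 (D.T.obj M)).pair ((D.T2 M).pr0 ≫ D.l.app M)
        ((D.T2 M).pr1 ≫ D.l.app M) hP)) ≫ D.T.map (D.T2 (D.T.obj M)).pr0)
        ≫ D.T.map (D.p.app (D.T.obj M))
      = ((W ≫ D.T.map ((D.T2 (D.T.obj M)).pair ((D.T2 M).pr0 ≫ D.l.app M)
        ((D.T2 M).pr1 ≫ D.l.app M) hP)) ≫ D.T.map (D.T2 (D.T.obj M)).pr1)
        ≫ D.T.map (D.p.app (D.T.obj M)) := by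
    rw [hz0, hz1]
    simp only [Category.assoc, ← D.T.map_comp]
    rw [D.l_p, ← Category.assoc ((D.T2 M).pr0), (D.T2 M).comm, Category.assoc]
  have hcond' : (((W ≫ D.T.map ((D.T2 (D.T.obj M)).pair ((D.T2 M).pr0 ≫ D.l.app M)
        ((D.T2 M).pr1 ≫ D.l.app M) hP)) ≫ D.T.map (D.T2 (D.T.obj M)).pr0)
        ≫ D.c.app (D.T.obj M)) ≫ D.p.app (D.T.obj (D.T.obj M))
      = (((W ≫ D.T.map ((D.T2 (D.T.obj M)).pair ((D.T2 M).pr0 ≫ D.l.app M)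
        ((D.T2 M).pr1 ≫ D.l.app M) hP)) ≫ D.T.map (D.T2 (D.T.obj M)).pr1)
        ≫ D.c.app (D.T.obj M)) ≫ D.p.app (D.T.obj (D.T.obj M)) := by
    simp only [Category.assoc, D.c_p]
    simpa only [Category.assoc] using hcond
  obtain ⟨w3, h30, h31, h32⟩ := D.c_add (D.T.obj M) _ _ hcond hcond'
  have hwZ : w3 = W ≫ D.T.map ((D.T2 (D.T.obj M)).pair ((D.T2 M).pr0 ≫ D.l.app M)
      ((D.T2 M).pr1 ≫ D.l.app M) hP) := by
    refine (D.T2T (D.T.obj M)).hom_ext _ _ ?_ ?_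
    · rw [h30]
    · rw [h31]
  rw [hwZ] at h32
  have hD : (((W ≫ D.T.map ((D.T2 (D.T.obj M)).pair ((D.T2 M).pr0 ≫ D.l.app M)
        ((D.T2 M).pr1 ≫ D.l.app M) hP)) ≫ D.T.map (D.T2 (D.T.obj M)).pr0)
        ≫ D.c.app (D.T.obj M)) ≫ D.T.map K ≫ D.p.app (D.T.obj M)
      = (((W ≫ D.T.map ((D.T2 (D.T.obj M)).pair ((D.T2 M).pr0 ≫ D.l.app M)
        ((D.T2 M).pr1 ≫ D.l.app M) hP)) ≫ D.T.map (D.T2 (D.T.obj M)).pr1)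
        ≫ D.c.app (D.T.obj M)) ≫ D.T.map K ≫ D.p.app (D.T.obj M) := by
    rw [← Category.assoc _ (D.T.map K) (D.p.app (D.T.obj M)),
      ← Category.assoc _ (D.T.map K) (D.p.app (D.T.obj M)), hz0, hz1, e2, e2]
    exact hB
  have hD' : ((((W ≫ D.T.map ((D.T2 (D.T.obj M)).pair ((D.T2 M).pr0 ≫ D.l.app M)
        ((D.T2 M).pr1 ≫ D.l.app M) hP)) ≫ D.T.map (D.T2 (D.T.obj M)).pr0)
        ≫ D.c.app (D.T.obj M)) ≫ D.T.map K) ≫ D.p.app (D.T.obj M)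
      = ((((W ≫ D.T.map ((D.T2 (D.T.obj M)).pair ((D.T2 M).pr0 ≫ D.l.app M)
        ((D.T2 M).pr1 ≫ D.l.app M) hP)) ≫ D.T.map (D.T2 (D.T.obj M)).pr1)
        ≫ D.c.app (D.T.obj M)) ≫ D.T.map K) ≫ D.p.app (D.T.obj M) := by
    simpa only [Category.assoc] using hD
  calc (W ≫ D.T.map (D.add M) ≫ K) ≫ D.l.app M
      = W ≫ D.T.map (D.add M) ≫ (K ≫ D.l.app M) := by simp only [Category.assoc]
    _ = W ≫ D.T.map (D.add M) ≫ D.T.map (D.l.app M) ≫ D.c.app (D.T.obj M)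
          ≫ D.T.map K := by rw [hKl2]
    _ = W ≫ D.T.map (D.add M ≫ D.l.app M) ≫ D.c.app (D.T.obj M) ≫ D.T.map K := by
        rw [D.T.map_comp]; simp only [Category.assoc]
    _ = W ≫ D.T.map ((D.T2 (D.T.obj M)).pair ((D.T2 M).pr0 ≫ D.l.app M)
          ((D.T2 M).pr1 ≫ D.l.app M) hP ≫ D.add (D.T.obj M)) ≫ D.c.app (D.T.obj M)
          ≫ D.T.map K := by rw [e1]
    _ = ((W ≫ D.T.map ((D.T2 (D.T.obj M)).pair ((D.T2 M).pr0 ≫ D.l.app M)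
          ((D.T2 M).pr1 ≫ D.l.app M) hP)) ≫ D.T.map (D.add (D.T.obj M))
          ≫ D.c.app (D.T.obj M)) ≫ D.T.map K := by
        rw [D.T.map_comp]; simp only [Category.assoc]
    _ = ((D.T2 (D.T.obj (D.T.obj M))).pair _ _ hcond' ≫ D.add (D.T.obj (D.T.obj M)))
          ≫ D.T.map K := by rw [h32]
    _ = (D.T2 (D.T.obj M)).pair _ _ hD' ≫ D.add (D.T.obj M) := by
        rw [Category.assoc ((D.T2 (D.T.obj (D.T.obj M))).pair _ _ hcond')
          (D.add (D.T.obj (D.T.obj M))) (D.T.map K)]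
        exact D.add_nat K _ _ hcond' hD'
    _ = (D.T2 (D.T.obj M)).pair (((W ≫ D.T.map (D.T2 M).pr0) ≫ K) ≫ D.l.app M)
          (((W ≫ D.T.map (D.T2 M).pr1) ≫ K) ≫ D.l.app M) hB ≫ D.add (D.T.obj M) := by
        refine congrArg (· ≫ D.add (D.T.obj M)) ?_
        refine (D.T2 (D.T.obj M)).pair_congr ?_ ?_ _ _
        · rw [hz0]; exact e2 (W ≫ D.T.map (D.T2 M).pr0)
        · rw [hz1]; exact e2 (W ≫ D.T.map (D.T2 M).pr1)
    _ = ((D.T2 M).pair ((W ≫ D.T.map (D.T2 M).pr0) ≫ K)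
          ((W ≫ D.T.map (D.T2 M).pr1) ≫ K) h'' ≫ D.add M) ≫ D.l.app M := by
        rw [Category.assoc ((D.T2 M).pair ((W ≫ D.T.map (D.T2 M).pr0) ≫ K)
          ((W ≫ D.T.map (D.T2 M).pr1) ≫ K) h'') (D.add M) (D.l.app M),
          D.tadd_l M _ _ h'' hB]

/-- `T(0) ≫ K = p ≫ 0`. -/
lemma zeroK (hKl2 : K ≫ D.l.app M
      = D.T.map (D.l.app M) ≫ D.c.app (D.T.obj M) ≫ D.T.map K)
    (hKp : K ≫ D.p.app M = D.p.app (D.T.obj M) ≫ D.p.app M) :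
    D.T.map (D.zero.app M) ≫ K = D.p.app M ≫ D.zero.app M := by
  have A : D.T.map (D.zero.app M) ≫ K ≫ D.l.app M
      = (D.T.map (D.zero.app M) ≫ K) ≫ D.zero.app (D.T.obj M) := by
    calc D.T.map (D.zero.app M) ≫ K ≫ D.l.app M
        = D.T.map (D.zero.app M) ≫ D.T.map (D.l.app M) ≫ D.c.app (D.T.obj M)
            ≫ D.T.map K := by rw [hKl2]
      _ = D.T.map (D.zero.app M ≫ D.l.app M) ≫ D.c.app (D.T.obj M)
            ≫ D.T.map K := by rw [D.T.map_comp]; simp only [Category.assoc]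
      _ = D.T.map (D.zero.app M ≫ D.T.map (D.zero.app M)) ≫ D.c.app (D.T.obj M)
            ≫ D.T.map K := by rw [D.l_zero]
      _ = D.T.map (D.zero.app M) ≫ D.T.map (D.T.map (D.zero.app M))
            ≫ D.c.app (D.T.obj M) ≫ D.T.map K := by
          rw [D.T.map_comp]; simp only [Category.assoc]
      _ = D.T.map (D.zero.app M) ≫ D.c.app M ≫ D.T.map (D.T.map (D.zero.app M))
            ≫ D.T.map K := by rw [← Category.assoc (D.T.map (D.T.map (D.zero.app M))),
            D.c_nat (A := M) (B := D.T.obj M) (D.zero.app M), Category.assoc]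
      _ = D.zero.app (D.T.obj M) ≫ D.T.map (D.T.map (D.zero.app M))
            ≫ D.T.map K := by rw [← Category.assoc, D.c_zero]
      _ = D.zero.app (D.T.obj M) ≫ D.T.map (D.T.map (D.zero.app M) ≫ K) := by
          rw [D.T.map_comp]
      _ = (D.T.map (D.zero.app M) ≫ K) ≫ D.zero.app (D.T.obj M) := by
          rw [← D.zero_nat (A := D.T.obj M) (B := D.T.obj M)
            (D.T.map (D.zero.app M) ≫ K)]
  have B : D.T.map (D.zero.app M) ≫ K
      = ((D.T.map (D.zero.app M) ≫ K) ≫ D.p.app M) ≫ D.zero.app M := by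
    have := congrArg (· ≫ D.p.app (D.T.obj M)) A
    simp only [Category.assoc, D.l_p, D.zero_p, Category.comp_id] at this
    conv_lhs => rw [← this]
    simp only [Category.assoc]
  have hKp0 : (D.T.map (D.zero.app M) ≫ K) ≫ D.p.app M = D.p.app M := by
    rw [Category.assoc, hKp, ← Category.assoc,
      D.p_nat (A := M) (B := D.T.obj M) (D.zero.app M)]
    simp [D.zero_p]
  rw [B, hKp0]

end KLemmas

end TangentCat

end Stmt18Aux

/-- In any tangent category, an affine connection `(K,H)` on
`M` (a connection on the tangent bundle `p_M`) is torsion-free (`cK = K`) if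
and only if `Hc = τH`, where `τ = ⟨π₁,π₀⟩ : T₂(M) → T₂(M)` is the twist. -/
theorem stmt18 (D : TangentCat C) {M : C}
    (K : D.T.obj (D.T.obj M) ⟶ D.T.obj M)
    (H : (D.T2 M).P ⟶ D.T.obj (D.T.obj M))
    (hconn : IsConnectionPair D (D.p.app M) (D.l.app M) (D.T2 M)
      (D.zero.app M) (D.vmu M) (D.T2 M) K H) :
    D.c.app M ≫ K = K ↔
      H ≫ D.c.app M
        = (D.T2 M).pair (D.T2 M).pr1 (D.T2 M).pr0 (D.T2 M).comm.symm ≫ H := by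
  obtain ⟨⟨hlK, hKp, hKl, hKl2⟩, ⟨hHq, hHp, -, -⟩, hHK, R, hR0, hR1, hid⟩ := hconn
  set τ : (D.T2 M).P ⟶ (D.T2 M).P :=
    (D.T2 M).pair (D.T2 M).pr1 (D.T2 M).pr0 (D.T2 M).comm.symm with hτ
  set U : D.T.obj (D.T.obj M) ⟶ (D.T2 M).P := D.hdesc (D.p.app M) (D.T2 M) with hU
  have hU0 : U ≫ (D.T2 M).pr0 = D.T.map (D.p.app M) := (D.T2 M).pair_pr0 _ _ _
  have hU1 : U ≫ (D.T2 M).pr1 = D.p.app (D.T.obj M) := (D.T2 M).pair_pr1 _ _ _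
  have hτ0 : τ ≫ (D.T2 M).pr0 = (D.T2 M).pr1 := (D.T2 M).pair_pr0 _ _ _
  have hτ1 : τ ≫ (D.T2 M).pr1 = (D.T2 M).pr0 := (D.T2 M).pair_pr1 _ _ _
  have hcnd : (R ≫ D.vmu M) ≫ D.p.app (D.T.obj M)
      = (U ≫ H) ≫ D.p.app (D.T.obj M) := by
    rw [Category.assoc, D.vmu_p M, hR1, Category.assoc, hHp, hU1]
  have hone : (D.T2 (D.T.obj M)).pair (R ≫ D.vmu M) (U ≫ H) hcnd
      ≫ D.add (D.T.obj M) = 𝟙 (D.T.obj (D.T.obj M)) := by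
    unfold TangentCat.hadd at hid
    rw [dif_pos hcnd] at hid
    exact hid
  constructor
  · -- torsion-free implies Hc = τH
    intro htf
    have hcKR : (H ≫ D.c.app M) ≫ R = (τ ≫ H) ≫ R := by
      refine (D.T2 M).hom_ext _ _ ?_ ?_
      · simp only [Category.assoc, hR0]
        rw [htf, hHK]
        simp only [← Category.assoc]
        rw [hτ1, (D.T2 M).comm]
      · simp only [Category.assoc, hR1]
        rw [D.c_p, hHq, hHp, hτ1]
    have hcKU : (H ≫ D.c.app M) ≫ U = (τ ≫ H) ≫ U := by
      refine (D.T2 M).hom_ext _ _ ?_ ?_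
      · simp only [Category.assoc, hU0]
        rw [D.c_Tp, hHq, hHp, hτ0]
      · simp only [Category.assoc, hU1]
        rw [D.c_p, hHq, hHp, hτ1]
    have hside : ∀ {Y : C} (a : Y ⟶ D.T.obj (D.T.obj M)),
        (a ≫ (R ≫ D.vmu M)) ≫ D.p.app (D.T.obj M)
          = (a ≫ (U ≫ H)) ≫ D.p.app (D.T.obj M) := by
      intro Y a
      simp only [Category.assoc]
      rw [D.vmu_p M, hR1, hHp, hU1]
    calc H ≫ D.c.app M
        = (H ≫ D.c.app M) ≫ ((D.T2 (D.T.obj M)).pair (R ≫ D.vmu M) (U ≫ H) hcnd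
            ≫ D.add (D.T.obj M)) := by rw [hone]; simp
      _ = ((D.T2 (D.T.obj M)).pair ((H ≫ D.c.app M) ≫ (R ≫ D.vmu M))
            ((H ≫ D.c.app M) ≫ (U ≫ H)) (hside _)) ≫ D.add (D.T.obj M) := by
          rw [← Category.assoc (H ≫ D.c.app M)
            ((D.T2 (D.T.obj M)).pair (R ≫ D.vmu M) (U ≫ H) hcnd) (D.add (D.T.obj M)),
            (D.T2 (D.T.obj M)).comp_pair (H ≫ D.c.app M)
            (R ≫ D.vmu M) (U ≫ H) hcnd (hside _)]
      _ = ((D.T2 (D.T.obj M)).pair ((τ ≫ H) ≫ (R ≫ D.vmu M))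
            ((τ ≫ H) ≫ (U ≫ H)) (hside _)) ≫ D.add (D.T.obj M) := by
          refine congrArg (· ≫ D.add (D.T.obj M)) ?_
          refine (D.T2 (D.T.obj M)).pair_congr ?_ ?_ _ _
          · rw [← Category.assoc, hcKR, Category.assoc]
          · rw [← Category.assoc, hcKU, Category.assoc]
      _ = (τ ≫ H) ≫ ((D.T2 (D.T.obj M)).pair (R ≫ D.vmu M) (U ≫ H) hcnd
            ≫ D.add (D.T.obj M)) := by
          rw [← Category.assoc (τ ≫ H)
            ((D.T2 (D.T.obj M)).pair (R ≫ D.vmu M) (U ≫ H) hcnd) (D.add (D.T.obj M)),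
            (D.T2 (D.T.obj M)).comp_pair (τ ≫ H)
            (R ≫ D.vmu M) (U ≫ H) hcnd (hside _)]
      _ = τ ≫ H := by rw [hone]; simp
  · -- Hc = τH implies torsion-free
    intro hHc
    obtain ⟨W, hW0, hW1, hWeq⟩ := D.tadd_c M (R ≫ D.vmu M) (U ≫ H) hcnd
    have hcKpp : D.c.app M ≫ K ≫ D.p.app M = D.p.app (D.T.obj M) ≫ D.p.app M := by
      rw [hKp, ← Category.assoc, D.c_p, D.p_nat (A := D.T.obj M) (B := M) (D.p.app M)]
    have hcomp : ∀ {Y : C} (x : Y ⟶ D.T.obj (D.T.obj M)),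
        ((x ≫ D.c.app M) ≫ K) ≫ D.p.app M
          = (x ≫ D.p.app (D.T.obj M)) ≫ D.p.app M := by
      intro Y x
      simp only [Category.assoc]
      rw [hcKpp]
    have h'' : ((W ≫ D.T.map (D.T2 M).pr0) ≫ K) ≫ D.p.app M
        = ((W ≫ D.T.map (D.T2 M).pr1) ≫ K) ≫ D.p.app M := by
      rw [hW0, hW1, hcomp (R ≫ D.vmu M), hcomp (U ≫ H), hcnd]
    have hTK := D.TaddK K hKl2 W h''
    -- the vertical part:  (μ ≫ c) ≫ K = π₀
    have hvc : ((D.T2 M).pr0 ≫ D.l.app M) ≫ D.p.app (D.T.obj M)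
        = ((D.T2 M).pr1 ≫ D.T.map (D.zero.app M)) ≫ D.p.app (D.T.obj M) := by
      rw [Category.assoc, D.l_p, Category.assoc,
        D.p_nat (A := M) (B := D.T.obj M) (D.zero.app M),
        ← Category.assoc, ← Category.assoc, (D.T2 M).comm]
    have c1 : ((D.T2 M).pr0 ≫ D.l.app M) ≫ K = (D.T2 M).pr0 := by
      rw [Category.assoc, hlK, Category.comp_id]
    have c2 : ((D.T2 M).pr1 ≫ D.T.map (D.zero.app M)) ≫ K
        = (D.T2 M).pr0 ≫ D.p.app M ≫ D.zero.app M := by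
      rw [Category.assoc, D.zeroK K hKl2 hKp, ← Category.assoc,
        (D.T2 M).comm.symm, Category.assoc]
    have hq : (((D.T2 M).pr0 ≫ D.l.app M) ≫ K) ≫ D.p.app M
        = (((D.T2 M).pr1 ≫ D.T.map (D.zero.app M)) ≫ K) ≫ D.p.app M := by
      rw [c1, c2]
      simp [D.zero_p]
    have hz : (D.T2 M).pr0 ≫ D.p.app M
        = ((D.T2 M).pr0 ≫ D.p.app M ≫ D.zero.app M) ≫ D.p.app M := by
      simp [D.zero_p]
    have hmucK : (D.vmu M ≫ D.c.app M) ≫ K = (D.T2 M).pr0 := by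
      rw [D.vmu_c M hvc, Category.assoc _ (D.add (D.T.obj M)) K,
        D.addK K hKl _ _ hvc hq]
      have : (D.T2 M).pair (((D.T2 M).pr0 ≫ D.l.app M) ≫ K)
            (((D.T2 M).pr1 ≫ D.T.map (D.zero.app M)) ≫ K) hq
          = (D.T2 M).pair (D.T2 M).pr0
            ((D.T2 M).pr0 ≫ D.p.app M ≫ D.zero.app M) hz :=
        (D.T2 M).pair_congr c1 c2 _ _
      rw [this]
      exact D.add_zero' M (D.T2 M).pr0 hz
    -- the horizontal part
    have hUHcK : ((U ≫ H) ≫ D.c.app M) ≫ K = (K ≫ D.p.app M) ≫ D.zero.app M := by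
      have e : (U ≫ H) ≫ D.c.app M = U ≫ (τ ≫ H) := by
        rw [Category.assoc, hHc]
      rw [e]
      simp only [Category.assoc]
      rw [hHK]
      simp only [← Category.assoc]
      rw [Category.assoc U τ (D.T2 M).pr1, hτ1, hU0,
        D.p_nat (A := D.T.obj M) (B := M) (D.p.app M), ← hKp]
    have hz2 : K ≫ D.p.app M = (K ≫ D.p.app M ≫ D.zero.app M) ≫ D.p.app M := by
      simp [D.zero_p]
    have hWeq' : (D.T2 (D.T.obj M)).pair (R ≫ D.vmu M) (U ≫ H) hcnd
        ≫ D.add (D.T.obj M) ≫ D.c.app M ≫ K = W ≫ D.T.map (D.add M) ≫ K := by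
      have := congrArg (· ≫ K) hWeq
      simpa only [Category.assoc] using this
    calc D.c.app M ≫ K
        = ((D.T2 (D.T.obj M)).pair (R ≫ D.vmu M) (U ≫ H) hcnd
            ≫ D.add (D.T.obj M)) ≫ D.c.app M ≫ K := by
          rw [hone, Category.id_comp]
      _ = W ≫ D.T.map (D.add M) ≫ K := by
          simpa only [Category.assoc] using hWeq'
      _ = (D.T2 M).pair ((W ≫ D.T.map (D.T2 M).pr0) ≫ K)
            ((W ≫ D.T.map (D.T2 M).pr1) ≫ K) h'' ≫ D.add M := hTK
      _ = (D.T2 M).pair K (K ≫ D.p.app M ≫ D.zero.app M) hz2 ≫ D.add M := by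
          refine congrArg (· ≫ D.add M) ?_
          refine (D.T2 M).pair_congr ?_ ?_ _ _
          · rw [hW0, Category.assoc R (D.vmu M) (D.c.app M),
              Category.assoc R (D.vmu M ≫ D.c.app M) K, hmucK, hR0]
          · rw [hW1, hUHcK, Category.assoc]
      _ = K := D.add_zero' M K hz2
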